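/- Let (a,b) ∈ ℍ × ℍ with |a|² + |b|² = 1 and let (w,t) ∈ ℍ × ℝ with |w|² + t² = 1 and t < 1. Then |α_{a,b}(w,t)|² = 1/2 + (1/2)·⟨(w,t), (2·conj(a)·b, |a|² − |b|²)⟩, where ⟨(w,t),(w′,t′)⟩ = Re(conj(w)·w′) + t·t′ is the Euclidean inner product on ℍ × ℝ. -/

import Mathlib

/-!
With `s = 1 - t` the coefficients of `α` have squares `1/(2s)`, `s/2` and product `1/2`, so
`|α|² = |a|²|w|²/(2s) + ⟨aw, b⟩ + s|b|²/2`. Since `⟨aw, b⟩ = Re(conj w · conj a · b)` and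
`|w|² = s(1 + t)`, this is `((1+t)|a|² + (1-t)|b|²)/2`, i.e. the claim as `|a|² + |b|² = 1`.
-/

open scoped Quaternion RealInnerProductSpace

/-- `α_{a,b}(w,t) = (1/√(2(1−t)))·(a·w) + √((1−t)/2)·b`. -/
noncomputable def alphaFn (a b : ℍ[ℝ]) (w : ℍ[ℝ]) (t : ℝ) : ℍ[ℝ] :=
  (1 / Real.sqrt (2 * (1 - t))) • (a * w) + Real.sqrt ((1 - t) / 2) • b

/-- The Euclidean inner product on `ℍ × ℝ`:
`⟨(w,t),(w′,t′)⟩ = Re(conj(w)·w′) + t·t′`. -/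
noncomputable def euclInner (p q : ℍ[ℝ] × ℝ) : ℝ := (star p.1 * q.1).re + p.2 * q.2

theorem norm_smul_add_smul_sq_real {E : Type*} [NormedAddCommGroup E] [InnerProductSpace ℝ E]
    (c d : ℝ) (x y : E) :
    ‖c • x + d • y‖ ^ 2 = c ^ 2 * ‖x‖ ^ 2 + 2 * (c * d) * ⟪x, y⟫ + d ^ 2 * ‖y‖ ^ 2 := by
  rw [norm_add_sq_real, norm_smul, norm_smul, real_inner_smul_left, real_inner_smul_right,
    mul_pow, mul_pow, Real.norm_eq_abs, Real.norm_eq_abs, sq_abs, sq_abs]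
  ring

theorem Quaternion.inner_eq_re_star_mul (x y : ℍ[ℝ]) : ⟪x, y⟫ = (star x * y).re := by
  simp only [inner_def, re_mul, re_star, imI_star, imJ_star, imK_star]
  ring

theorem one_div_sqrt_two_mul_mul_sqrt_div_two {s : ℝ} (hs : 0 < s) :
    1 / √(2 * s) * √(s / 2) = 1 / 2 := by
  rw [one_div_mul_eq_div, ← Real.sqrt_div' _ (by positivity : (0:ℝ) ≤ 2 * s),
    show s / 2 / (2 * s) = (1 / 2) ^ 2 by field_simp, Real.sqrt_sq (by norm_num)]

/-- Let `(a,b) ∈ ℍ × ℍ` with `|a|² + |b|² = 1` and let `(w,t) ∈ ℍ × ℝ` with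
`|w|² + t² = 1` and `t < 1`.  Then
`|α_{a,b}(w,t)|² = 1/2 + (1/2)·⟨(w,t), (2·conj(a)·b, |a|² − |b|²)⟩`. -/
theorem norm_sq_alphaFn (a b w : ℍ[ℝ]) (t : ℝ)
    (hab : ‖a‖ ^ 2 + ‖b‖ ^ 2 = 1) (hwt : ‖w‖ ^ 2 + t ^ 2 = 1) (ht : t < 1) :
    ‖alphaFn a b w t‖ ^ 2 =
      1 / 2 + (1 / 2) * euclInner (w, t) (2 * (star a * b), ‖a‖ ^ 2 - ‖b‖ ^ 2) := by
  have hs : 0 < 1 - t := by linarith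
  have hc : (1 / √(2 * (1 - t))) ^ 2 = 1 / (2 * (1 - t)) := by
    rw [div_pow, one_pow, Real.sq_sqrt (by positivity)]
  have hd : √((1 - t) / 2) ^ 2 = (1 - t) / 2 := Real.sq_sqrt (by positivity)
  have hw : ‖w‖ ^ 2 = (1 - t) * (1 + t) := by linear_combination hwt
  have hinner : ⟪a * w, b⟫ = (star w * (star a * b)).re := by
    rw [Quaternion.inner_eq_re_star_mul, star_mul, mul_assoc]
  have htwo : (star w * (2 * (star a * b))).re = 2 * (star w * (star a * b)).re := by
    rw [two_mul, mul_add, Quaternion.re_add, two_mul]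
  rw [alphaFn, norm_smul_add_smul_sq_real, hc, hd, one_div_sqrt_two_mul_mul_sqrt_div_two hs,
    norm_mul, mul_pow, hw, hinner, euclInner, htwo]
  field_simp
  linear_combination hab
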